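/- arXiv:1310.6262 — 3 statements merged into one kernel-verified Lean document; each statement's English description precedes it below -/
import Mathlib

section
/- Let R be a commutative ring, G a group, and H, K subgroups of G. Then the permutation module R[G/K], viewed as an RH-module by restriction, is isomorphic to the direct sum over double coset representatives g ∈ H\G/K of the permutation modules R[H/(H ∩ gKg⁻¹)]. -/
/-!
The `H`-orbits on `G ⧸ K` are the images of the double cosets `HtK`, and by orbit–stabilizer the
orbit of `tK` is `H ⧸ (H ∩ tKt⁻¹)` via `h ↦ htK`. Hence, for a set `T` of double coset
representatives, `Σ t : T, H ⧸ (H ∩ tKt⁻¹) ≃ G ⧸ K` as `H`-sets, and taking free `R`-modules turns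
this disjoint union into a direct sum.
-/

open DirectSum

theorem Finsupp.mapDomain_smul_apply_eq {M H X : Type*} [AddCommMonoid M] [Group H]
    [MulAction H X] (h : H) (v : X →₀ M) (x : X) :
    Finsupp.mapDomain (h • ·) v x = v (h⁻¹ • x) :=
  Finsupp.mapDomain_equiv_apply (f := MulAction.toPerm h) v x

theorem Finsupp.exists_linearEquiv_directSum_commute_mapDomain_smul
    (R : Type*) [Semiring R] {H X ι : Type*} [Group H] [MulAction H X]
    {Y : ι → Type*} [∀ i, MulAction H (Y i)]
    (φ : (Σ i, Y i) ≃ X) (hφ : ∀ (h : H) (p : Σ i, Y i), φ (h • p) = h • φ p) :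
    ∃ e : (X →₀ R) ≃ₗ[R] ⨁ i, (Y i →₀ R), ∀ (h : H) (v : X →₀ R) (i : ι),
      e (Finsupp.mapDomain (h • ·) v) i = Finsupp.mapDomain (h • ·) (e v i) := by
  classical
  let e := (Finsupp.domLCongr (R := R) (M := R) φ.symm).trans (sigmaFinsuppLequivDFinsupp R)
  have he : ∀ v i y, e v i y = v (φ ⟨i, y⟩) := fun v i y => by
    simp [e, sigmaFinsuppLequivDFinsupp, Finsupp.split_apply]
  refine ⟨e, fun h v i => Finsupp.ext fun y => ?_⟩
  rw [he, Finsupp.mapDomain_smul_apply_eq, Finsupp.mapDomain_smul_apply_eq, he, ← Sigma.smul_mk,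
    hφ]

namespace DoubleCoset

variable {G : Type*} [Group G] (H K : Subgroup G)

/-- `H ∩ tKt⁻¹`, the stabilizer in `H` of the coset `tK`, as a subgroup of `H`. -/
def cosetStabilizer (t : G) : Subgroup H :=
  (K.map (MulAut.conj t).toMonoidHom).subgroupOf H

variable {H K}

theorem mem_cosetStabilizer_iff {t : G} {h : H} :
    h ∈ cosetStabilizer H K t ↔ t⁻¹ * h * t ∈ K := by
  rw [cosetStabilizer, Subgroup.mem_subgroupOf, Subgroup.mem_map_equiv, MulAut.conj_symm_apply]

theorem mk_mul_eq_mk_mul_iff {t : G} {a b : H} :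
    ((a * t : G) : G ⧸ K) = ((b * t : G) : G ⧸ K) ↔ a⁻¹ * b ∈ cosetStabilizer H K t := by
  rw [QuotientGroup.eq, mem_cosetStabilizer_iff]
  simp only [mul_inv_rev, Subgroup.coe_mul, Subgroup.coe_inv, mul_assoc]

variable (H K) in
def cosetMap (t : G) : H ⧸ cosetStabilizer H K t → G ⧸ K :=
  Quotient.map' (fun h : H => (h : G) * t) fun _ _ => by
    simp only [QuotientGroup.leftRel_apply, ← mk_mul_eq_mk_mul_iff, QuotientGroup.eq, imp_self]

theorem cosetMap_smul (t : G) (h : H) (y : H ⧸ cosetStabilizer H K t) :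
    cosetMap H K t (h • y) = h • cosetMap H K t y := by
  induction y using QuotientGroup.induction_on with
  | H a => exact congrArg QuotientGroup.mk (mul_assoc (h : G) a t)

variable (H K) in
def sigmaCosetMap (T : Set G) : (Σ t : T, H ⧸ cosetStabilizer H K t) → G ⧸ K :=
  fun p => cosetMap H K p.1 p.2

theorem sigmaCosetMap_smul (T : Set G) (h : H) (p : Σ t : T, H ⧸ cosetStabilizer H K t) :
    sigmaCosetMap H K T (h • p) = h • sigmaCosetMap H K T p :=
  cosetMap_smul _ h p.2

theorem sigmaCosetMap_bijective {T : Set G}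
    (hcover : ∀ g : G, ∃ t ∈ T, ∃ h ∈ H, ∃ k ∈ K, g = h * t * k)
    (huniq : ∀ t ∈ T, ∀ t' ∈ T, (∃ h ∈ H, ∃ k ∈ K, t' = h * t * k) → t' = t) :
    Function.Bijective (sigmaCosetMap H K T) := by
  constructor
  · rintro ⟨⟨t, ht⟩, y⟩ ⟨⟨t', ht'⟩, y'⟩ hyy'
    induction y using QuotientGroup.induction_on with | H a =>
    induction y' using QuotientGroup.induction_on with | H b =>
    have hk : (a * t : G)⁻¹ * (b * t') ∈ K := QuotientGroup.eq.mp hyy'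
    obtain rfl : t' = t := huniq t ht t' ht'
      ⟨b⁻¹ * a, H.mul_mem (H.inv_mem b.2) a.2, _, hk, by push_cast; group⟩
    exact Sigma.ext rfl (heq_of_eq (QuotientGroup.eq.mpr (mk_mul_eq_mk_mul_iff.mp hyy')))
  · intro x
    induction x using QuotientGroup.induction_on with | H g =>
    obtain ⟨t, ht, h, hh, k, hk, rfl⟩ := hcover g
    exact ⟨⟨⟨t, ht⟩, (⟨h, hh⟩ : H)⟩, QuotientGroup.eq.mpr (by simpa [mul_assoc] using hk)⟩

theorem exists_eq_mul_out_mul (g : G) :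
    ∃ q : Quotient (H : Set G) K, ∃ h ∈ H, ∃ k ∈ K, g = h * q.out * k :=
  ⟨mk H K g, (eq H K _ g).mp (out_eq' H K _)⟩

theorem out_eq_out_of_eq_mul_out_mul {q q' : Quotient (H : Set G) K}
    (hqq' : ∃ h ∈ H, ∃ k ∈ K, q'.out = h * q.out * k) : q'.out = q.out := by
  rw [← out_eq' H K q, ← out_eq' H K q', (eq H K _ _).mpr hqq']

end DoubleCoset

/-- The permutation module `R[G/K]`, restricted to `RH`, is isomorphic to the
direct sum over double coset representatives `t ∈ H\G/K` of the permutation modules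
`R[H/(H ∩ tKt⁻¹)]`, `H`-equivariantly. -/
theorem stmt_3 (R : Type*) [CommRing R] {G : Type*} [Group G] (H K : Subgroup G) :
    ∃ T : Set G,
      (∀ g : G, ∃ t ∈ T, ∃ h ∈ H, ∃ k ∈ K, g = h * t * k) ∧
      (∀ t ∈ T, ∀ t' ∈ T, (∃ h ∈ H, ∃ k ∈ K, t' = h * t * k) → t' = t) ∧
      ∃ e : (G ⧸ K →₀ R) ≃ₗ[R]
          (⨁ t : T, (H ⧸ ((K.map (MulAut.conj (t : G)).toMonoidHom).subgroupOf H) →₀ R)),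
        ∀ (h : H) (v : G ⧸ K →₀ R) (t : T),
          e (Finsupp.mapDomain (fun x => (h : G) • x) v) t
            = Finsupp.mapDomain (fun y => h • y) (e v t) := by
  let T : Set G := Set.range (Quotient.out : DoubleCoset.Quotient (H : Set G) K → G)
  have hcover (g : G) : ∃ t ∈ T, ∃ h ∈ H, ∃ k ∈ K, g = h * t * k := by
    obtain ⟨q, hqg⟩ := DoubleCoset.exists_eq_mul_out_mul (H := H) (K := K) g
    exact ⟨q.out, ⟨q, rfl⟩, hqg⟩
  have huniq : ∀ t ∈ T, ∀ t' ∈ T, (∃ h ∈ H, ∃ k ∈ K, t' = h * t * k) → t' = t := by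
    rintro _ ⟨q, rfl⟩ _ ⟨q', rfl⟩
    exact DoubleCoset.out_eq_out_of_eq_mul_out_mul
  obtain ⟨e, he⟩ := Finsupp.exists_linearEquiv_directSum_commute_mapDomain_smul R
    (Equiv.ofBijective _ (DoubleCoset.sigmaCosetMap_bijective hcover huniq))
    (DoubleCoset.sigmaCosetMap_smul T)
  exact ⟨T, hcover, huniq, e, he⟩
end

section
/- Let R be a commutative ring, G a group, and H, K finite subgroups of G. Then there is an R-module isomorphism ψ : R[H\G/K] → Hom_{RG}(R[G/H], R[G/K]), sending the double coset HxK to the RG-module homomorphism determined by gH ↦ Σ_{u ∈ H/(H ∩ xKx⁻¹)} guxK. -/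
/-!
The `G`-orbits on `G/H × G/K` are classified by the relative position
`(gH, cK) ↦ H g⁻¹ c K ∈ H\G/K`. A `G`-equivariant map `R[G/H] → R[G/K]` is determined by the
image `v` of the coset `H`, and equivariance says exactly that `v` is `H`-invariant, i.e. a
finitely supported function of `H c K`; so `ψ w` sends `gH` to `Σ_c w(H g⁻¹ c K) • cK`.
For `w` the indicator of `HxK`, the cosets `cK` with `H g⁻¹ c K = HxK` are the `g h x K` with
`h ∈ H`, and `h x K = h' x K` iff `h⁻¹ h' ∈ x K x⁻¹`, which gives the sum over `H/(H ∩ xKx⁻¹)`.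
-/

open Finsupp

namespace PermutationModule

section Equivariance

variable (G : Type*) {α β R : Type*} [Group G] [MulAction G α] [MulAction G β] [Semiring R]

def IsEquivariant (f : (α →₀ R) →ₗ[R] (β →₀ R)) : Prop :=
  ∀ (g : G) (v : α →₀ R), f (mapDomain (fun x => g • x) v) = mapDomain (fun x => g • x) (f v)

variable {G}

lemma mapDomain_smul_apply (g : G) (u : β →₀ R) (c : β) :
    mapDomain (fun x => g • x) u c = u (g⁻¹ • c) := by
  rw [← mapDomain_apply (MulAction.injective g) u (g⁻¹ • c), smul_inv_smul]

lemma isEquivariant_of_single {f : (α →₀ R) →ₗ[R] (β →₀ R)}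
    (hf : ∀ (g : G) (a : α),
      f (single (g • a) 1) = mapDomain (fun x => g • x) (f (single a 1))) :
    IsEquivariant G f := by
  intro g v
  have : f ∘ₗ lmapDomain R R (fun x => g • x) = lmapDomain R R (fun x => g • x) ∘ₗ f :=
    lhom_ext' fun a => LinearMap.ext_ring <| by simpa using hf g a
  exact LinearMap.congr_fun this v

lemma IsEquivariant.ext [MulAction.IsPretransitive G α] {f f' : (α →₀ R) →ₗ[R] (β →₀ R)}
    (hf : IsEquivariant G f) (hf' : IsEquivariant G f') (a₀ : α)
    (h : f (single a₀ 1) = f' (single a₀ 1)) : f = f' := by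
  refine lhom_ext' fun a => LinearMap.ext_ring ?_
  obtain ⟨g, rfl⟩ := MulAction.exists_smul_eq G a₀ a
  have hg : single (g • a₀) (1 : R) = mapDomain (fun x => g • x) (single a₀ 1) :=
    (mapDomain_single).symm
  simp only [LinearMap.comp_apply, lsingle_apply, hg, hf g, hf' g, h]

end Equivariance

section RelativePosition

variable {G : Type*} [Group G] (H K : Subgroup G)

def relPos : G ⧸ H → G ⧸ K → DoubleCoset.Quotient (H : Set G) (K : Set G) :=
  fun a c => Quotient.liftOn₂' a c (fun g c => DoubleCoset.mk H K (g⁻¹ * c))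
    fun g c g' c' hg hc => by
      rw [QuotientGroup.leftRel_apply] at hg hc
      exact (DoubleCoset.eq _ _ _ _).2 ⟨(g⁻¹ * g')⁻¹, H.inv_mem hg, c⁻¹ * c', hc, by group⟩

lemma relPos_mk (g c : G) :
    relPos H K (g : G ⧸ H) (c : G ⧸ K) = DoubleCoset.mk H K (g⁻¹ * c) := rfl

lemma relPos_smul_smul (g : G) (a : G ⧸ H) (c : G ⧸ K) :
    relPos H K (g • a) (g • c) = relPos H K a c := by
  induction a using QuotientGroup.induction_on with | H a =>
  induction c using QuotientGroup.induction_on with | H c =>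
  simp only [MulAction.Quotient.smul_mk, relPos_mk, smul_eq_mul, mul_inv_rev, mul_assoc,
    inv_mul_cancel_left]

lemma relPos_one_mk_out (D : DoubleCoset.Quotient (H : Set G) (K : Set G)) :
    relPos H K (1 : G) (D.out : G) = D := by
  rw [relPos_mk, inv_one, one_mul, DoubleCoset.out_eq']

lemma exists_smul_eq_of_relPos_one_eq {c c' : G ⧸ K}
    (hcc' : relPos H K (1 : G) c = relPos H K (1 : G) c') : ∃ h : H, (h : G) • c = c' := by
  induction c using QuotientGroup.induction_on with | H c =>
  induction c' using QuotientGroup.induction_on with | H c' =>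
  simp only [relPos_mk, inv_one, one_mul, DoubleCoset.eq] at hcc'
  obtain ⟨h, hh, k, hk, rfl⟩ := hcc'
  refine ⟨⟨h, hh⟩, ?_⟩
  rw [MulAction.Quotient.smul_mk, smul_eq_mul, QuotientGroup.eq]
  simpa [mul_assoc] using hk

lemma setOf_relPos_eq (g x : G) :
    {c | relPos H K (g : G ⧸ H) c = DoubleCoset.mk H K x}
      = Set.range fun h : H => ((g * h * x : G) : G ⧸ K) := by
  ext c
  induction c using QuotientGroup.induction_on with | H c =>
  simp only [Set.mem_ofPred_eq, relPos_mk, DoubleCoset.eq, Set.mem_range, Subtype.exists,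
    QuotientGroup.eq]
  constructor
  · rintro ⟨h, hh, k, hk, hx⟩
    refine ⟨h⁻¹, H.inv_mem hh, ?_⟩
    have : (g * h⁻¹ * x)⁻¹ * c = k⁻¹ := by rw [hx]; group
    exact this ▸ K.inv_mem hk
  · rintro ⟨h, hh, hk⟩
    exact ⟨h⁻¹, H.inv_mem hh, ((g * h * x)⁻¹ * c)⁻¹, K.inv_mem hk, by group⟩

lemma finite_setOf_relPos_eq [Finite H] (a : G ⧸ H)
    (D : DoubleCoset.Quotient (H : Set G) (K : Set G)) : {c | relPos H K a c = D}.Finite := by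
  obtain ⟨g, rfl⟩ := QuotientGroup.mk_surjective a
  rw [← DoubleCoset.out_eq' H K D, setOf_relPos_eq]
  exact Set.finite_range _

lemma mk_mul_mul_eq_iff (g x : G) (h h' : H) :
    ((g * h * x : G) : G ⧸ K) = ((g * h' * x : G) : G ⧸ K) ↔
      (h : H ⧸ (K.map (MulAut.conj x).toMonoidHom).subgroupOf H) = h' := by
  rw [QuotientGroup.eq, QuotientGroup.eq, Subgroup.mem_subgroupOf, Subgroup.mem_map_equiv]
  simp [mul_assoc]

lemma injective_mk_mul_out_mul (g x : G) :
    Function.Injective fun u : H ⧸ (K.map (MulAut.conj x).toMonoidHom).subgroupOf H =>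
      ((g * ((Quotient.out u : H) : G) * x : G) : G ⧸ K) := fun u u' huu' => by
  rwa [mk_mul_mul_eq_iff, QuotientGroup.out_eq', QuotientGroup.out_eq'] at huu'

lemma range_mk_mul_out_mul (g x : G) :
    (Set.range fun u : H ⧸ (K.map (MulAut.conj x).toMonoidHom).subgroupOf H =>
      ((g * ((Quotient.out u : H) : G) * x : G) : G ⧸ K))
      = Set.range fun h : H => ((g * h * x : G) : G ⧸ K) := by
  refine subset_antisymm (Set.range_subset_iff.2 fun u => ⟨_, rfl⟩) ?_
  rintro _ ⟨h, rfl⟩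
  exact ⟨h, (mk_mul_mul_eq_iff H K g x _ h).2 (QuotientGroup.out_eq' _)⟩

end RelativePosition

section DoubleCosetHom

variable (R : Type*) [CommSemiring R] {G : Type*} [Group G] (H K : Subgroup G) [Finite H]

noncomputable def doubleCosetHom :
    (DoubleCoset.Quotient (H : Set G) (K : Set G) →₀ R) →ₗ[R]
      ((G ⧸ H →₀ R) →ₗ[R] (G ⧸ K →₀ R)) :=
  Finsupp.lift _ R _ fun D => Finsupp.lift _ R _ fun a =>
    ∑ c ∈ (finite_setOf_relPos_eq H K a D).toFinset, single c 1

lemma doubleCosetHom_single_single (D : DoubleCoset.Quotient (H : Set G) (K : Set G))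
    (a : G ⧸ H) :
    doubleCosetHom R H K (single D 1) (single a 1)
      = ∑ c ∈ (finite_setOf_relPos_eq H K a D).toFinset, single c 1 := by
  simp [doubleCosetHom]

lemma doubleCosetHom_single_apply (w : DoubleCoset.Quotient (H : Set G) (K : Set G) →₀ R)
    (a : G ⧸ H) (c : G ⧸ K) :
    doubleCosetHom R H K w (single a 1) c = w (relPos H K a c) := by
  classical
  induction w using Finsupp.induction_linear with
  | zero => simp
  | add w w' hw hw' => simp [hw, hw']
  | single D r =>
    rw [← mul_one r, ← smul_eq_mul, ← smul_single, map_smul, LinearMap.smul_apply,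
      doubleCosetHom_single_single]
    simp [single_apply, eq_comm]

lemma isEquivariant_doubleCosetHom (w : DoubleCoset.Quotient (H : Set G) (K : Set G) →₀ R) :
    IsEquivariant G (doubleCosetHom R H K w) :=
  isEquivariant_of_single fun g a => by
    ext c
    rw [mapDomain_smul_apply, doubleCosetHom_single_apply, doubleCosetHom_single_apply,
      ← relPos_smul_smul H K g⁻¹, inv_smul_smul]

lemma doubleCosetHom_injective : Function.Injective (doubleCosetHom R H K) := by
  intro w w' hww'
  ext D
  simpa only [doubleCosetHom_single_apply, relPos_one_mk_out] using
    DFunLike.congr_fun (LinearMap.congr_fun hww' (single ((1 : G) : G ⧸ H) 1))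
      ((D.out : G) : G ⧸ K)

lemma exists_doubleCosetHom_eq_of_isEquivariant {f : (G ⧸ H →₀ R) →ₗ[R] (G ⧸ K →₀ R)}
    (hf : IsEquivariant G f) : ∃ w, doubleCosetHom R H K w = f := by
  set v := f (single (1 : G) 1)
  have hv : ∀ (h : H) (c : G ⧸ K), v ((h : G) • c) = v c := by
    intro h c
    have hh : (h : G) • ((1 : G) : G ⧸ H) = (1 : G) := by
      rw [MulAction.Quotient.smul_mk, smul_eq_mul, mul_one, QuotientGroup.eq]
      simp
    have hvh : v = mapDomain (fun x => (h : G) • x) v := by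
      simpa only [mapDomain_single, hh] using hf h (single (1 : G) 1)
    simpa only [mapDomain_smul_apply, inv_smul_smul] using DFunLike.congr_fun hvh ((h : G) • c)
  have hs : Function.Injective fun D : DoubleCoset.Quotient (H : Set G) (K : Set G) =>
      ((D.out : G) : G ⧸ K) := fun D D' hDD' => by
    simpa only [relPos_one_mk_out] using congrArg (relPos H K (1 : G)) hDD'
  refine ⟨comapDomain _ v hs.injOn, IsEquivariant.ext (isEquivariant_doubleCosetHom R H K _)
    hf (1 : G) ?_⟩
  ext c
  obtain ⟨h, hc⟩ := exists_smul_eq_of_relPos_one_eq H K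
    (relPos_one_mk_out H K (relPos H K (1 : G) c)).symm
  rw [doubleCosetHom_single_apply, comapDomain_apply, ← hc, hv]

lemma doubleCosetHom_single_single_mk (x g : G) :
    doubleCosetHom R H K (single (DoubleCoset.mk H K x) 1) (single (g : G ⧸ H) 1)
      = ∑ᶠ u : H ⧸ ((K.map (MulAut.conj x).toMonoidHom).subgroupOf H),
          single (((g * ((Quotient.out u : H) : G) * x : G) : G ⧸ K)) (1 : R) := by
  classical
  have := Fintype.ofFinite (H ⧸ (K.map (MulAut.conj x).toMonoidHom).subgroupOf H)
  have hrange :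
      Finset.univ.image (fun u : H ⧸ (K.map (MulAut.conj x).toMonoidHom).subgroupOf H =>
        ((g * ((Quotient.out u : H) : G) * x : G) : G ⧸ K))
        = (finite_setOf_relPos_eq H K (g : G ⧸ H) (DoubleCoset.mk H K x)).toFinset := by
    rw [← Finset.coe_inj, Finset.coe_image, Finset.coe_univ, Set.image_univ,
      Set.Finite.coe_toFinset, setOf_relPos_eq, range_mk_mul_out_mul]
  rw [finsum_eq_sum_of_fintype, doubleCosetHom_single_single, ← hrange,
    Finset.sum_image fun u _ u' _ huu' => injective_mk_mul_out_mul H K g x huu']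

end DoubleCosetHom

end PermutationModule

theorem stmt_4_general (R : Type*) [CommRing R] {G : Type*} [Group G] (H K : Subgroup G)
    [Finite H] :
    ∃ ψ : (DoubleCoset.Quotient (H : Set G) (K : Set G) →₀ R) →ₗ[R]
        ((G ⧸ H →₀ R) →ₗ[R] (G ⧸ K →₀ R)),
      Function.Injective ψ ∧
      (∀ f : (G ⧸ H →₀ R) →ₗ[R] (G ⧸ K →₀ R),
        (∀ (g : G) (v : G ⧸ H →₀ R),
          f (Finsupp.mapDomain (fun x => g • x) v)
            = Finsupp.mapDomain (fun x => g • x) (f v)) ↔ f ∈ Set.range ψ) ∧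
      (∀ x g : G,
        ψ (Finsupp.single (DoubleCoset.mk H K x) 1) (Finsupp.single ((g : G ⧸ H)) 1)
          = ∑ᶠ u : H ⧸ ((K.map (MulAut.conj x).toMonoidHom).subgroupOf H),
              Finsupp.single (((g * ((Quotient.out u : H) : G) * x : G) : G ⧸ K)) (1 : R)) := by
  refine ⟨PermutationModule.doubleCosetHom R H K,
    PermutationModule.doubleCosetHom_injective R H K,
    fun f => ⟨PermutationModule.exists_doubleCosetHom_eq_of_isEquivariant R H K, ?_⟩,
    PermutationModule.doubleCosetHom_single_single_mk R H K⟩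
  rintro ⟨w, rfl⟩
  exact PermutationModule.isEquivariant_doubleCosetHom R H K w

/-- For finite subgroups `H, K ≤ G` there is an `R`-module isomorphism
`ψ : R[H\G/K] ≅ Hom_{RG}(R[G/H], R[G/K])` sending the double coset `HxK` to the map
`gH ↦ Σ_{u ∈ H/(H ∩ xKx⁻¹)} guxK`.  Here `Hom_{RG}` is realised as the `R`-linear maps
commuting with the `G`-actions, so `ψ` is injective with range exactly the equivariant maps. -/
theorem stmt_4 (R : Type*) [CommRing R] {G : Type*} [Group G] (H K : Subgroup G)
    [Finite H] [Finite K] :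
    ∃ ψ : (DoubleCoset.Quotient (H : Set G) (K : Set G) →₀ R) →ₗ[R]
        ((G ⧸ H →₀ R) →ₗ[R] (G ⧸ K →₀ R)),
      Function.Injective ψ ∧
      (∀ f : (G ⧸ H →₀ R) →ₗ[R] (G ⧸ K →₀ R),
        (∀ (g : G) (v : G ⧸ H →₀ R),
          f (Finsupp.mapDomain (fun x => g • x) v)
            = Finsupp.mapDomain (fun x => g • x) (f v)) ↔ f ∈ Set.range ψ) ∧
      (∀ x g : G,
        ψ (Finsupp.single (DoubleCoset.mk H K x) 1) (Finsupp.single ((g : G ⧸ H)) 1)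
          = ∑ᶠ u : H ⧸ ((K.map (MulAut.conj x).toMonoidHom).subgroupOf H),
              Finsupp.single (((g * ((Quotient.out u : H) : G) * x : G) : G ⧸ K)) (1 : R)) :=
  stmt_4_general R H K
end

section
/- Let R be a commutative ring, H a finite group, J, K ≤ H subgroups, and M an RH-module. Then the Mackey formula holds for fixed points: the map M^K → M^J given by first applying the trace tr^H_K : M^K → M^H and then the inclusion M^H ⊆ M^J equals the sum over double coset representatives x ∈ J\H/K of the composites M^K → M^{J^x ∩ K} →(apply x) M^{J ∩ xKx⁻¹} →(trace) M^J, where the first map is inclusion of fixed points, the second sends m to xm, and the third is the relative trace tr^J_{J ∩ xKx⁻¹}. -/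
/-- Mackey formula for fixed points.  For a finite group `H`, subgroups
`J, K ≤ H`, an `RH`-module `M`, a set `T` of `(J,K)`-double coset representatives, and any
`m ∈ M^K`, the trace `tr^H_K m = Σ_{c ∈ H/K} c·m` (viewed in `M^J`) equals
`Σ_{t ∈ T} tr^J_{J ∩ tKt⁻¹} (t·m)`. -/
theorem stmt_15 (R : Type*) [CommRing R] {H : Type*} [Group H] [Finite H]
    (J K : Subgroup H)
    {M : Type*} [AddCommGroup M] [Module R M] [DistribMulAction H M] [SMulCommClass H R M]
    (T : Set H)
    (hT1 : ∀ g : H, ∃ t ∈ T, ∃ j ∈ J, ∃ k ∈ K, g = j * t * k)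
    (hT2 : ∀ t ∈ T, ∀ t' ∈ T, (∃ j ∈ J, ∃ k ∈ K, t' = j * t * k) → t' = t) :
    ∀ m ∈ MulAction.fixedPoints K M,
      ∑ᶠ c : H ⧸ K, (Quotient.out c) • m
        = ∑ᶠ t ∈ T,
            ∑ᶠ d : J ⧸ ((K.map (MulAut.conj t).toMonoidHom).subgroupOf J),
              ((Quotient.out d : J) : H) • (t • m) := by
  classical
  intro m hm
  haveI : Fintype H := Fintype.ofFinite H
  set L : H → Subgroup J := fun t => (K.map (MulAut.conj t).toMonoidHom).subgroupOf J with hL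
  have hK : ∀ (g k : H), k ∈ K → (g * k) • m = g • m := by
    intro g k hk
    rw [mul_smul]
    congr 1
    exact hm (⟨k, hk⟩ : K)
  choose t ht j hj k hk hgeq using hT1
  have hrep : ∀ (x : H) (a : J),
      ∃ κ ∈ K, ((Quotient.out (QuotientGroup.mk a : J ⧸ L x) : J) : H) * x = (a : H) * x * κ := by
    intro x a
    have h1 : (QuotientGroup.mk (Quotient.out (QuotientGroup.mk a : J ⧸ L x)) : J ⧸ L x)
        = QuotientGroup.mk a := Quotient.out_eq _
    rw [eq_comm, QuotientGroup.eq] at h1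
    rw [hL, Subgroup.mem_subgroupOf] at h1
    obtain ⟨y, hy, hxy⟩ := h1
    refine ⟨y, hy, ?_⟩
    simp only [MulEquiv.coe_toMonoidHom, MulAut.conj_apply] at hxy
    push_cast at hxy
    have : ((Quotient.out (QuotientGroup.mk a : J ⧸ L x) : J) : H) = (a : H) * (x * y * x⁻¹) := by
      rw [hxy]; group; rfl
    rw [this]; group
  letI : (x : H) → Fintype (J ⧸ L x) := fun x => Fintype.ofFinite _
  have hTfin : T.Finite := Set.toFinite T
  rw [finsum_eq_sum_of_fintype, finsum_mem_eq_finite_toFinset_sum _ hTfin]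
  simp only [finsum_eq_sum_of_fintype]
  rw [Finset.sum_sigma']
  refine Finset.sum_bij' (i := fun c _ => (⟨t (Quotient.out c), QuotientGroup.mk (⟨j (Quotient.out c), hj _⟩ : J)⟩ : Σ x : H, J ⧸ L x))
    (j := fun p _ => (QuotientGroup.mk (((Quotient.out p.2 : J) : H) * p.1) : H ⧸ K))
    ?_ ?_ ?_ ?_ ?_
  · intro c _
    simp only [Finset.mem_sigma, Set.Finite.mem_toFinset, Finset.mem_univ, and_true]
    exact ht _
  · intro p _
    exact Finset.mem_univ _
  · -- left inverse
    intro c _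
    obtain ⟨κ, hκ, hq⟩ := hrep (t (Quotient.out c)) (⟨j (Quotient.out c), hj _⟩ : J)
    dsimp only
    rw [hq]
    have hc : (QuotientGroup.mk (Quotient.out c) : H ⧸ K) = c := Quotient.out_eq _
    refine Eq.trans ?_ hc
    rw [QuotientGroup.eq]
    show (j (Quotient.out c) * t (Quotient.out c) * κ)⁻¹ * Quotient.out c ∈ K
    obtain ⟨A, B, E, hA, hB, hE, hABE⟩ : ∃ A B E, j (Quotient.out c) = A ∧ t (Quotient.out c) = B
        ∧ k (Quotient.out c) = E ∧ Quotient.out c = A * B * E := ⟨_, _, _, rfl, rfl, rfl, hgeq _⟩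
    rw [hA, hB, hABE]
    have : (A * B * κ)⁻¹ * (A * B * E) = κ⁻¹ * E := by group
    rw [this]
    exact K.mul_mem (K.inv_mem hκ) (hE ▸ hk _)
  · -- right inverse
    rintro ⟨x, d⟩ hp
    simp only [Finset.mem_sigma, Set.Finite.mem_toFinset, Finset.mem_univ, and_true] at hp
    dsimp only
    have h1 : ((Quotient.out (QuotientGroup.mk (((Quotient.out d : J) : H) * x) : H ⧸ K) : H))⁻¹
        * (((Quotient.out d : J) : H) * x) ∈ K := by
      rw [← QuotientGroup.eq]
      exact Quotient.out_eq _
    have hgeqc := hgeq (Quotient.out (QuotientGroup.mk (((Quotient.out d : J) : H) * x) : H ⧸ K))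
    have hBx : t (Quotient.out (QuotientGroup.mk (((Quotient.out d : J) : H) * x) : H ⧸ K)) = x := by
      apply hT2 x hp _ (ht _)
      refine ⟨(j (Quotient.out (QuotientGroup.mk (((Quotient.out d : J) : H) * x) : H ⧸ K)))⁻¹
          * ((Quotient.out d : J) : H),
        J.mul_mem (J.inv_mem (hj _)) (SetLike.coe_mem _),
        ((Quotient.out (QuotientGroup.mk (((Quotient.out d : J) : H) * x) : H ⧸ K) : H)⁻¹
          * (((Quotient.out d : J) : H) * x))⁻¹
          * (k (Quotient.out (QuotientGroup.mk (((Quotient.out d : J) : H) * x) : H ⧸ K)))⁻¹,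
        K.mul_mem (K.inv_mem h1) (K.inv_mem (hk _)), ?_⟩
      have key : ∀ G jx tx kx Dv : H, G = jx * tx * kx →
          tx = (jx⁻¹ * Dv) * x * ((G⁻¹ * (Dv * x))⁻¹ * kx⁻¹) := by
        intro G jx tx kx Dv hh
        subst hh
        group
      exact key _ _ _ _ _ hgeqc
    rw [hBx]
    rw [hBx] at hgeqc
    have hd : (QuotientGroup.mk (Quotient.out d) : J ⧸ L x) = d := Quotient.out_eq _
    have hmem : ((⟨j (Quotient.out (QuotientGroup.mk (((Quotient.out d : J) : H) * x) : H ⧸ K)),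
        hj _⟩ : J))⁻¹ * Quotient.out d ∈ L x := by
      refine Subgroup.mem_subgroupOf.mpr (Subgroup.mem_map.mpr
        ⟨k (Quotient.out (QuotientGroup.mk (((Quotient.out d : J) : H) * x) : H ⧸ K))
          * ((Quotient.out (QuotientGroup.mk (((Quotient.out d : J) : H) * x) : H ⧸ K) : H)⁻¹
            * (((Quotient.out d : J) : H) * x)),
        K.mul_mem (hk _) h1, ?_⟩)
      simp only [MulEquiv.coe_toMonoidHom, MulAut.conj_apply]
      push_cast
      have key2 : ∀ G jx kx Dv : H, G = jx * x * kx →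
          x * (kx * (G⁻¹ * (Dv * x))) * x⁻¹ = jx⁻¹ * Dv := by
        intro G jx kx Dv hh
        subst hh
        group
      exact key2 _ _ _ _ hgeqc
    exact congrArg (Sigma.mk x) (((QuotientGroup.eq).mpr hmem).trans hd)
  · -- values agree
    intro c _
    obtain ⟨κ, hκ, hq⟩ := hrep (t (Quotient.out c)) (⟨j (Quotient.out c), hj _⟩ : J)
    dsimp only
    rw [← mul_smul, hq, hK _ _ hκ]
    show Quotient.out c • m = (j (Quotient.out c) * t (Quotient.out c)) • m
    obtain ⟨A, B, E, hA, hB, hE, hABE⟩ : ∃ A B E, j (Quotient.out c) = A ∧ t (Quotient.out c) = B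
        ∧ k (Quotient.out c) = E ∧ Quotient.out c = A * B * E := ⟨_, _, _, rfl, rfl, rfl, hgeq _⟩
    rw [hA, hB, hABE]
    exact hK _ _ (hE ▸ hk _)
end
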